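/- arXiv:math/0301217 — 2 statements merged into one kernel-verified Lean document; each statement's English description precedes it below -/
import Mathlib

section
/- Given decreasing functions φ, ψ : [1,+∞) → (0,+∞) with lim_{t→∞} φ(t) = lim_{t→∞} ψ(t) = 0, there exist a continuous function f on [-1,1] that is not identically zero and a strictly increasing sequence (n_j) of positive integers such that for every j: E_{n_j}(f) ≤ ψ(n_j), and |f(x)| ≤ e^{-n_j} for all x with |x| ≤ φ(n_j). -/
open Filter MeasureTheory Set

/-- Best uniform approximation error by polynomials of degree ≤ n on [-1,1]. -/
noncomputable def En (f : ℝ → ℝ) (n : ℕ) : ℝ :=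
  sInf ((fun P : Polynomial ℝ => sSup ((fun x => |f x - P.eval x|) '' Set.Icc (-1:ℝ) 1)) ''
    {P : Polynomial ℝ | P.natDegree ≤ n})

/-!
`f` is the uniform limit of polynomials `Q (j + 1) = Q j * S` with `S x = L ((1 - x²) ^ N)`, where
`L s` is the probability of at most `m` successes in `2m + 1` trials of bias `s`. As `L` is
exponentially close to `1` near `s = 0` and to `0` near `s = 1`, we get `0 ≤ S ≤ 1` on `[-1, 1]`,
`1 - S ≤ (1/2)^m` outside a small interval around `0` (on which `Q j`, vanishing at `0`, is already
small), and `S x ≤ (4 N x²) ^ (m + 1)`. So `Q (j + 1)` is as close to `Q j` as we like, and it is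
flat at `0` to an order that grows linearly with its degree `n`; since `φ → 0`, taking `m` large
makes it smaller than `e^(-n) / 2` on `|x| ≤ φ n`. With step errors below
`min (ψ n_j) (e^(-n_j)) / 2 ^ (j + 2)`, which decrease because `ψ` does, `f` stays within half of
`min (ψ n_j) (e^(-n_j))` of `Q j`, which gives both conclusions.
-/

open Polynomial

theorem En_le_of_abs_sub_le {f : ℝ → ℝ} {n : ℕ} {P : ℝ[X]} (hP : P.natDegree ≤ n) {B : ℝ}
    (hB : 0 ≤ B) (h : ∀ x ∈ Icc (-1:ℝ) 1, |f x - P.eval x| ≤ B) : En f n ≤ B := by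
  refine csInf_le_of_le ⟨0, ?_⟩ ⟨P, hP, rfl⟩ (Real.sSup_le ?_ hB)
  · rintro _ ⟨Q, -, rfl⟩
    exact Real.sSup_nonneg (by rintro _ ⟨x, -, rfl⟩; exact abs_nonneg _)
  · rintro _ ⟨x, hx, rfl⟩
    exact h x hx

theorem exists_tendstoUniformlyOn_of_dist_succ_le {α E : Type*} [PseudoMetricSpace E]
    [CompleteSpace E] {Q : ℕ → α → E} {s : Set α} {c : ℕ → ℝ} (hc : ∀ j, c (j + 1) ≤ c j / 2)
    (hQ : ∀ j, ∀ x ∈ s, dist (Q j x) (Q (j + 1) x) ≤ c j) :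
    ∃ f : α → E, TendstoUniformlyOn Q f atTop s ∧ ∀ j, ∀ x ∈ s, dist (Q j x) (f x) ≤ 2 * c j := by
  have hgeom : ∀ j k, c (k + j) ≤ c j / 2 ^ k := by
    intro j k
    induction k with
    | zero => simp
    | succ k ih => calc
        c (k + 1 + j) ≤ c (k + j) / 2 := by rw [Nat.add_right_comm]; exact hc (k + j)
        _ ≤ c j / 2 ^ k / 2 := by gcongr
        _ = c j / 2 ^ (k + 1) := by ring
  have hshift : ∀ j, ∀ x ∈ s, ∀ k, dist (Q (k + j) x) (Q (k + 1 + j) x) ≤ 2 * c j / 2 / 2 ^ k := by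
    intro j x hx k
    rw [Nat.add_right_comm]
    exact (hQ (k + j) x hx).trans ((hgeom j k).trans_eq (by ring))
  choose f hf using fun x : s =>
    cauchySeq_tendsto_of_complete (cauchySeq_of_le_geometric_two (hshift 0 x x.2))
  classical
  let F : α → E := fun x => if hx : x ∈ s then f ⟨x, hx⟩ else Q 0 x
  have hdist : ∀ j, ∀ x ∈ s, dist (Q j x) (F x) ≤ 2 * c j := by
    intro j x hx
    have hlim : Tendsto (fun k => Q (k + j) x) atTop (nhds (F x)) := by
      simpa [F, hx, Function.comp_def] using (hf ⟨x, hx⟩).comp (tendsto_add_atTop_nat j)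
    simpa using dist_le_of_le_geometric_two_of_tendsto₀ (hshift j x hx) hlim
  refine ⟨F, Metric.tendstoUniformlyOn_iff.2 fun ε hε => ?_, hdist⟩
  have hc0 : Tendsto (fun j => 2 * (c 0 / 2 ^ j)) atTop (nhds 0) := by
    simpa [div_eq_mul_inv] using ((tendsto_pow_atTop_nhds_zero_of_lt_one
      (by norm_num : (0:ℝ) ≤ 2⁻¹) (by norm_num)).const_mul (c 0)).const_mul 2
  filter_upwards [hc0.eventually_lt_const hε] with j hj x hx
  rw [dist_comm]
  calc dist (Q j x) (F x) ≤ 2 * c j := hdist j x hx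
    _ ≤ 2 * (c 0 / 2 ^ j) := by gcongr; simpa using hgeom 0 j
    _ < ε := hj

theorem bernsteinPolynomial_eval_nonneg (n ν : ℕ) {s : ℝ} (h0 : 0 ≤ s) (h1 : s ≤ 1) :
    0 ≤ (bernsteinPolynomial ℝ n ν).eval s := by
  have : 0 ≤ 1 - s := sub_nonneg.2 h1
  simp only [bernsteinPolynomial, eval_mul, eval_pow, eval_natCast, eval_sub, eval_one, eval_X]
  positivity

/-- The probability of at most `m` successes in `2 * m + 1` independent trials that each succeed
with probability `X`. -/
noncomputable def binomialLowerTail (m : ℕ) : ℝ[X] :=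
  ∑ k ∈ Finset.range (m + 1), bernsteinPolynomial ℝ (2 * m + 1) k

namespace binomialLowerTail

theorem natDegree_le (m : ℕ) : (binomialLowerTail m).natDegree ≤ 2 * m + 1 := by
  refine natDegree_sum_le_of_forall_le _ _ fun k hk => ?_
  have hk : k ≤ 2 * m + 1 := by rw [Finset.mem_range] at hk; omega
  unfold bernsteinPolynomial
  compute_degree
  omega

theorem add_comp_one_sub (m : ℕ) :
    binomialLowerTail m + (binomialLowerTail m).comp (1 - X) = 1 := by
  have hflip : (binomialLowerTail m).comp (1 - X) =
      ∑ k ∈ Finset.Ico (m + 1) (2 * m + 2), bernsteinPolynomial ℝ (2 * m + 1) k := by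
    rw [binomialLowerTail, Polynomial.sum_comp, Finset.range_eq_Ico,
      Finset.sum_congr rfl fun k hk => bernsteinPolynomial.flip ℝ _ k
        (by rw [Finset.mem_Ico] at hk; omega),
      Finset.sum_Ico_reflect _ _ (by omega)]
    congr 2; omega
  rw [hflip, binomialLowerTail, Finset.sum_range_add_sum_Ico _ (by omega),
    ← bernsteinPolynomial.sum ℝ (2 * m + 1)]

theorem eval_nonneg (m : ℕ) {s : ℝ} (h0 : 0 ≤ s) (h1 : s ≤ 1) :
    0 ≤ (binomialLowerTail m).eval s := by
  rw [binomialLowerTail, eval_finsetSum]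
  exact Finset.sum_nonneg fun k _ => bernsteinPolynomial_eval_nonneg _ k h0 h1

theorem eval_add_eval_one_sub (m : ℕ) (s : ℝ) :
    (binomialLowerTail m).eval s + (binomialLowerTail m).eval (1 - s) = 1 := by
  simpa using congr_arg (eval s) (add_comp_one_sub m)

theorem eval_le (m : ℕ) {s : ℝ} (h0 : 0 ≤ s) (h1 : s ≤ 1) :
    (binomialLowerTail m).eval s ≤ 4 ^ m * (1 - s) ^ (m + 1) := by
  have h1s : 0 ≤ 1 - s := sub_nonneg.2 h1
  calc (binomialLowerTail m).eval s
      = ∑ k ∈ Finset.range (m + 1),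
          ((2 * m + 1).choose k : ℝ) * s ^ k * (1 - s) ^ (2 * m + 1 - k) := by
        simp [binomialLowerTail, eval_finsetSum, bernsteinPolynomial]
    _ ≤ ∑ k ∈ Finset.range (m + 1), ((2 * m + 1).choose k : ℝ) * (1 - s) ^ (m + 1) := by
        refine Finset.sum_le_sum fun k hk => ?_
        rw [Finset.mem_range] at hk
        rw [mul_assoc]
        gcongr
        calc s ^ k * (1 - s) ^ (2 * m + 1 - k) ≤ 1 * (1 - s) ^ (m + 1) :=
              mul_le_mul (pow_le_one₀ h0 h1) (pow_le_pow_of_le_one h1s (by linarith) (by omega))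
                (by positivity) zero_le_one
          _ = (1 - s) ^ (m + 1) := one_mul _
    _ = 4 ^ m * (1 - s) ^ (m + 1) := by
        rw [← Finset.sum_mul, ← Nat.cast_sum, Nat.sum_range_choose_halfway]
        push_cast
        ring

end binomialLowerTail

noncomputable def notchPoly (m N : ℕ) : ℝ[X] := (binomialLowerTail m).comp ((1 - X ^ 2) ^ N)

namespace notchPoly

theorem natDegree_le (m N : ℕ) : (notchPoly m N).natDegree ≤ (2 * m + 1) * (2 * N) := by
  refine natDegree_comp_le.trans (Nat.mul_le_mul (binomialLowerTail.natDegree_le m) ?_)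
  compute_degree
  omega

theorem eval_eq (m N : ℕ) (x : ℝ) :
    (notchPoly m N).eval x = (binomialLowerTail m).eval ((1 - x ^ 2) ^ N) := by
  simp [notchPoly]

variable {m N : ℕ} {x : ℝ}

theorem pow_one_sub_sq_mem_Icc (hx : x ^ 2 ≤ 1) : (1 - x ^ 2) ^ N ∈ Icc (0:ℝ) 1 :=
  ⟨pow_nonneg (by linarith) N, pow_le_one₀ (by linarith) (by nlinarith)⟩

theorem eval_nonneg (hx : x ^ 2 ≤ 1) : 0 ≤ (notchPoly m N).eval x := by
  obtain ⟨h0, h1⟩ := pow_one_sub_sq_mem_Icc (N := N) hx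
  exact eval_eq m N x ▸ binomialLowerTail.eval_nonneg m h0 h1

theorem eval_le_one (hx : x ^ 2 ≤ 1) : (notchPoly m N).eval x ≤ 1 := by
  obtain ⟨h0, h1⟩ := pow_one_sub_sq_mem_Icc (N := N) hx
  have hsum := binomialLowerTail.eval_add_eval_one_sub m ((1 - x ^ 2) ^ N)
  have := binomialLowerTail.eval_nonneg m (sub_nonneg.2 h1) (sub_le_self 1 h0)
  rw [eval_eq]
  linarith

theorem one_sub_eval_le (hx : x ^ 2 ≤ 1) :
    1 - (notchPoly m N).eval x ≤ 4 ^ m * ((1 - x ^ 2) ^ N) ^ (m + 1) := by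
  obtain ⟨h0, h1⟩ := pow_one_sub_sq_mem_Icc (N := N) hx
  have hsum := binomialLowerTail.eval_add_eval_one_sub m ((1 - x ^ 2) ^ N)
  have := binomialLowerTail.eval_le m (sub_nonneg.2 h1) (sub_le_self 1 h0)
  rw [sub_sub_cancel] at this
  rw [eval_eq]
  linarith

theorem eval_le (hx : x ^ 2 ≤ 1) : (notchPoly m N).eval x ≤ 4 ^ m * (N * x ^ 2) ^ (m + 1) := by
  obtain ⟨h0, h1⟩ := pow_one_sub_sq_mem_Icc (N := N) hx
  have hbernoulli : 1 - (1 - x ^ 2) ^ N ≤ N * x ^ 2 := by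
    have := one_add_mul_le_pow (a := -x ^ 2) (by nlinarith) N
    rw [← sub_eq_add_neg] at this
    linarith
  rw [eval_eq]
  refine (binomialLowerTail.eval_le m h0 h1).trans ?_
  gcongr

end notchPoly

structure IsAdmissible (P : ℝ[X]) : Prop where
  eval_zero : P.eval 0 = 0
  abs_eval_le_one : ∀ x ∈ Icc (-1:ℝ) 1, |P.eval x| ≤ 1

structure IsFlatAt (φ : ℝ → ℝ) (P : ℝ[X]) (n : ℕ) : Prop where
  natDegree_le : P.natDegree ≤ n
  le_one : φ n ≤ 1
  abs_eval_le : ∀ x, |x| ≤ φ n → |P.eval x| ≤ Real.exp (-n) / 2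

theorem IsAdmissible.mul_notchPoly {P : ℝ[X]} (hP : IsAdmissible P) (m N : ℕ) :
    IsAdmissible (P * notchPoly m N) where
  eval_zero := by simp [hP.eval_zero]
  abs_eval_le_one x hx := by
    have hx2 : x ^ 2 ≤ 1 := (sq_le_one_iff_abs_le_one x).2 (abs_le.2 hx)
    rw [eval_mul, abs_mul, abs_of_nonneg (notchPoly.eval_nonneg hx2)]
    exact mul_le_one₀ (hP.abs_eval_le_one x hx) (notchPoly.eval_nonneg hx2)
      (notchPoly.eval_le_one hx2)

theorem IsAdmissible.abs_eval_mul_notchPoly_sub_le {P : ℝ[X]} (hP : IsAdmissible P) {m N : ℕ}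
    {r γ : ℝ} (hr : 0 ≤ r) (hnear : ∀ x, |x| < r → |P.eval x| ≤ γ) (hN : (1 - r ^ 2) ^ N ≤ 1 / 8)
    (hm : (1 / 2) ^ m ≤ γ) :
    ∀ x ∈ Icc (-1:ℝ) 1, |(P * notchPoly m N).eval x - P.eval x| ≤ γ := by
  intro x hx
  have hx2 : x ^ 2 ≤ 1 := (sq_le_one_iff_abs_le_one x).2 (abs_le.2 hx)
  have hS0 := notchPoly.eval_nonneg (m := m) (N := N) hx2
  have hS1 := notchPoly.eval_le_one (m := m) (N := N) hx2
  rw [eval_mul, ← mul_sub_one, abs_mul, abs_of_nonpos (sub_nonpos.2 hS1), neg_sub]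
  rcases lt_or_ge |x| r with hxr | hrx
  · calc |P.eval x| * (1 - (notchPoly m N).eval x) ≤ γ * 1 :=
          mul_le_mul (hnear x hxr) (by linarith) (by linarith)
            ((pow_nonneg (by norm_num) m).trans hm)
      _ = γ := mul_one γ
  · have hfar : (1 - x ^ 2) ^ N ≤ 1 / 8 := by
      refine le_trans (pow_le_pow_left₀ (by linarith) ?_ N) hN
      nlinarith [sq_abs x, abs_nonneg x]
    calc |P.eval x| * (1 - (notchPoly m N).eval x)
        ≤ 1 * (4 ^ m * (1 / 8) ^ (m + 1)) := by
          refine mul_le_mul (hP.abs_eval_le_one x hx) ?_ (by linarith) zero_le_one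
          refine (notchPoly.one_sub_eval_le hx2).trans ?_
          gcongr
      _ ≤ (1 / 2) ^ m := by
          rw [one_mul, pow_succ, ← mul_assoc, ← mul_pow]
          norm_num
      _ ≤ γ := hm

theorem IsAdmissible.abs_eval_mul_notchPoly_le {P : ℝ[X]} (hP : IsAdmissible P) (m N : ℕ)
    {t x : ℝ} (ht : t ≤ 1) (hx : |x| ≤ t) :
    |(P * notchPoly m N).eval x| ≤ (4 * N * t ^ 2) ^ (m + 1) := by
  have hxt : x ^ 2 ≤ t ^ 2 := by nlinarith [sq_abs x, abs_nonneg x]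
  have hx2 : x ^ 2 ≤ 1 := (sq_le_one_iff_abs_le_one x).2 (hx.trans ht)
  have hS0 := notchPoly.eval_nonneg (m := m) (N := N) hx2
  rw [eval_mul, abs_mul, abs_of_nonneg hS0]
  calc |P.eval x| * (notchPoly m N).eval x ≤ 1 * (4 ^ m * (N * x ^ 2) ^ (m + 1)) :=
        mul_le_mul (hP.abs_eval_le_one x (abs_le.1 (hx.trans ht))) (notchPoly.eval_le hx2) hS0
          zero_le_one
    _ ≤ 4 ^ (m + 1) * (N * t ^ 2) ^ (m + 1) := by
        rw [one_mul]
        gcongr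
        · norm_num
        · omega
    _ = (4 * N * t ^ 2) ^ (m + 1) := by rw [← mul_pow, mul_assoc]

theorem pow_le_exp_neg_div_two {a : ℝ} {d N : ℕ} (ha0 : 0 ≤ a)
    (ha : a ≤ Real.exp (-(d + 4 * N + 1))) (m : ℕ) :
    a ^ (m + 1) ≤ Real.exp (-((d + (2 * m + 1) * (2 * N) : ℕ) : ℝ)) / 2 := by
  have hexp : Real.exp (-1) ≤ 1 / 2 := by
    rw [Real.exp_neg, one_div]
    exact inv_anti₀ two_pos (by linarith [Real.add_one_le_exp (1:ℝ)])
  calc a ^ (m + 1) ≤ Real.exp (-(d + 4 * N + 1)) ^ (m + 1) := by gcongr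
    _ = Real.exp (-((d + 4 * N + 1) * (m + 1))) := by rw [← Real.exp_nat_mul]; push_cast; ring_nf
    _ ≤ Real.exp (-((d + (2 * m + 1) * (2 * N) : ℕ) : ℝ) + -1) := by
        gcongr
        push_cast
        nlinarith [(Nat.cast_nonneg d : (0:ℝ) ≤ d), (Nat.cast_nonneg N : (0:ℝ) ≤ N),
          (Nat.cast_nonneg m : (0:ℝ) ≤ m)]
    _ ≤ Real.exp (-((d + (2 * m + 1) * (2 * N) : ℕ) : ℝ)) / 2 := by
        rw [Real.exp_add, div_eq_mul_one_div]
        gcongr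

theorem IsAdmissible.exists_isFlatAt_near {φ : ℝ → ℝ} (hφ0 : Tendsto φ atTop (nhds 0)) {P : ℝ[X]}
    (hP : IsAdmissible P) (n : ℕ) {γ : ℝ} (hγ : 0 < γ) :
    ∃ (P' : ℝ[X]) (n' : ℕ), IsAdmissible P' ∧ IsFlatAt φ P' n' ∧ n < n' ∧
      ∀ x ∈ Icc (-1:ℝ) 1, |P'.eval x - P.eval x| ≤ γ := by
  obtain ⟨δ, hδ, hcont⟩ :=
    Metric.continuousAt_iff.1 (P.continuous.continuousAt (x := 0)) γ hγ
  set r := min δ 1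
  have hr : 0 < r := lt_min hδ one_pos
  have hr1 : r ≤ 1 := min_le_right δ 1
  have hnear : ∀ x, |x| < r → |P.eval x| ≤ γ := fun x hx => by
    simpa [Real.dist_eq, hP.eval_zero] using
      (hcont (x := x) (by simpa [Real.dist_eq] using hx.trans_le (min_le_left δ 1))).le
  obtain ⟨N, hN, hN1⟩ := ((tendsto_pow_atTop_nhds_zero_of_lt_one (r := 1 - r ^ 2)
    (by nlinarith) (by nlinarith)).eventually_le_const
      (by norm_num : (0:ℝ) < 1 / 8)).and (eventually_ge_atTop 1) |>.exists
  set d := P.natDegree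
  set deg : ℕ → ℕ := fun m => d + (2 * m + 1) * (2 * N)
  have hφdeg : Tendsto (fun m => φ (deg m)) atTop (nhds 0) :=
    hφ0.comp (tendsto_natCast_atTop_atTop.comp
      (tendsto_atTop_mono (fun m => show m ≤ d + (2 * m + 1) * (2 * N) by nlinarith) tendsto_id))
  have hsmall : Tendsto (fun m => 4 * N * φ (deg m) ^ 2) atTop (nhds 0) := by
    simpa using (hφdeg.pow 2).const_mul (4 * (N : ℝ))
  have hhalf : ∀ᶠ m in atTop, (1 / 2 : ℝ) ^ m ≤ γ :=
    (tendsto_pow_atTop_nhds_zero_of_lt_one (by norm_num) (by norm_num)).eventually_le_const hγ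
  obtain ⟨m, hm, hnm, hφ1, hφexp⟩ := (hhalf.and ((eventually_ge_atTop n).and
    ((hφdeg.eventually_le_const one_pos).and
      (hsmall.eventually_le_const (Real.exp_pos (-(d + 4 * N + 1))))))).exists
  refine ⟨P * notchPoly m N, deg m, hP.mul_notchPoly m N, ⟨?_, hφ1, fun x hx => ?_⟩, ?_,
    hP.abs_eval_mul_notchPoly_sub_le hr.le hnear hN hm⟩
  · exact natDegree_mul_le.trans (Nat.add_le_add_left (notchPoly.natDegree_le m N) d)
  · exact (hP.abs_eval_mul_notchPoly_le m N hφ1 hx).trans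
      (pow_le_exp_neg_div_two (by positivity) hφexp m)
  · simp only [deg]
    nlinarith

theorem exists_seq_isAdmissible_isFlatAt {φ : ℝ → ℝ} (hφ0 : Tendsto φ atTop (nhds 0))
    (ε : ℕ → ℕ → ℝ) (hε : ∀ j n, 0 < n → 0 < ε j n) :
    ∃ (Q : ℕ → ℝ[X]) (n : ℕ → ℕ), StrictMono n ∧ 0 < n 0 ∧
      (∀ j, IsAdmissible (Q j) ∧ IsFlatAt φ (Q j) (n j)) ∧
      (∀ x ∈ Icc (-1:ℝ) 1, |(Q 0).eval x - x| ≤ 1 / 4) ∧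
      ∀ j, ∀ x ∈ Icc (-1:ℝ) 1, |(Q (j + 1)).eval x - (Q j).eval x| ≤ ε j (n j) := by
  choose! P' n' hadm hflat hlt hnear using fun (γ : ℝ) (P : ℝ[X]) (n : ℕ) (hP : IsAdmissible P)
    (hγ : 0 < γ) => hP.exists_isFlatAt_near hφ0 n hγ
  let seq : ℕ → ℝ[X] × ℕ := fun j => Nat.rec (P' (1 / 4) X 0, n' (1 / 4) X 0)
    (fun j s => (P' (ε j s.2) s.1 s.2, n' (ε j s.2) s.1 s.2)) j
  have hX : IsAdmissible X := ⟨eval_X, fun x hx => by simpa [abs_le] using hx⟩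
  have hseq : ∀ j, IsAdmissible (seq j).1 ∧ IsFlatAt φ (seq j).1 (seq j).2 ∧ 0 < (seq j).2 := by
    intro j
    induction j with
    | zero => exact ⟨hadm _ _ _ hX (by norm_num), hflat _ _ _ hX (by norm_num),
        hlt _ _ _ hX (by norm_num)⟩
    | succ j ih =>
      have hγ := hε j _ ih.2.2
      exact ⟨hadm _ _ _ ih.1 hγ, hflat _ _ _ ih.1 hγ, ih.2.2.trans (hlt _ _ _ ih.1 hγ)⟩
  refine ⟨fun j => (seq j).1, fun j => (seq j).2,
    strictMono_nat_of_lt_succ fun j => hlt _ _ _ (hseq j).1 (hε j _ (hseq j).2.2), (hseq 0).2.2,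
    fun j => ⟨(hseq j).1, (hseq j).2.1⟩, ?_,
    fun j => hnear _ _ _ (hseq j).1 (hε j _ (hseq j).2.2)⟩
  intro x hx
  simpa [seq] using hnear (1 / 4) X 0 hX (by norm_num) x hx

theorem exists_continuousOn_abs_sub_le_of_antitone {s : Set ℝ} {Q : ℕ → ℝ[X]} {b : ℕ → ℝ}
    (hb : Antitone b) (hb0 : ∀ j, 0 ≤ b j)
    (hQ : ∀ j, ∀ x ∈ s, |(Q (j + 1)).eval x - (Q j).eval x| ≤ b j / 2 ^ (j + 2)) :
    ∃ f : ℝ → ℝ, ContinuousOn f s ∧ ∀ j, ∀ x ∈ s, |f x - (Q j).eval x| ≤ b j / 2 := by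
  obtain ⟨f, hlim, hdist⟩ := exists_tendstoUniformlyOn_of_dist_succ_le
    (Q := fun j x => (Q j).eval x) (c := fun j => b j / 2 ^ (j + 2))
    (fun j => by
      rw [show j + 1 + 2 = (j + 2) + 1 by ring, pow_succ, ← div_div]
      gcongr
      exact hb j.le_succ)
    (fun j x hx => by rw [Real.dist_eq, abs_sub_comm]; exact hQ j x hx)
  refine ⟨f, hlim.continuousOn (Frequently.of_forall fun j => (Q j).continuous.continuousOn),
    fun j x hx => ?_⟩
  have h4 : b j / 2 ^ (j + 2) ≤ b j / 4 := by
    refine div_le_div_of_nonneg_left (hb0 j) four_pos ?_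
    calc (4:ℝ) = 2 ^ 2 := by norm_num
      _ ≤ 2 ^ (j + 2) := pow_le_pow_right₀ one_le_two (by omega)
  rw [abs_sub_comm, ← Real.dist_eq]
  linarith [hdist j x hx]

theorem IsFlatAt.En_le_and_abs_le {φ ψ : ℝ → ℝ} {P : ℝ[X]} {n : ℕ} (hP : IsFlatAt φ P n)
    (hψ : 0 < ψ n) {f : ℝ → ℝ}
    (hf : ∀ x ∈ Icc (-1:ℝ) 1, |f x - P.eval x| ≤ min (ψ n) (Real.exp (-n)) / 2) :
    En f n ≤ ψ n ∧ ∀ x : ℝ, |x| ≤ φ n → |f x| ≤ Real.exp (-n) := by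
  have hmin := lt_min hψ (Real.exp_pos (-n))
  refine ⟨En_le_of_abs_sub_le hP.natDegree_le hψ.le fun x hx => ?_, fun x hx => ?_⟩
  · linarith [hf x hx, min_le_left (ψ n) (Real.exp (-n))]
  · have h1 := hf x (abs_le.1 (hx.trans hP.le_one))
    have h2 := hP.abs_eval_le x hx
    linarith [abs_sub_abs_le_abs_sub (f x) (P.eval x), min_le_right (ψ n) (Real.exp (-n))]

theorem bernstein_flat_zeros_general
    (φ ψ : ℝ → ℝ)
    (hψpos : ∀ x, 1 ≤ x → 0 < ψ x)
    (hψanti : AntitoneOn ψ (Set.Ici (1:ℝ)))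
    (hφ0 : Tendsto φ atTop (nhds 0)) :
    ∃ f : ℝ → ℝ, ContinuousOn f (Set.Icc (-1:ℝ) 1) ∧
      (∃ x ∈ Set.Icc (-1:ℝ) 1, f x ≠ 0) ∧
      ∃ n : ℕ → ℕ, StrictMono n ∧ (∀ j, 0 < n j) ∧
        ∀ j, En f (n j) ≤ ψ (n j) ∧
          ∀ x : ℝ, |x| ≤ φ (n j) → |f x| ≤ Real.exp (-(n j : ℝ)) := by
  set M : ℕ → ℝ := fun k => min (ψ k) (Real.exp (-k))
  have hψpos' : ∀ k : ℕ, 0 < k → 0 < ψ k := fun k hk => hψpos k (by exact_mod_cast hk)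
  have hMpos : ∀ k, 0 < k → 0 < M k := fun k hk => lt_min (hψpos' k hk) (Real.exp_pos _)
  obtain ⟨Q, n, hn, hn0, hQ, hQ0, hstep⟩ := exists_seq_isAdmissible_isFlatAt hφ0
    (fun j k => M k / 2 ^ (j + 2)) fun j k hk => div_pos (hMpos k hk) (by positivity)
  have hnpos : ∀ j, 0 < n j := fun j => hn0.trans_le (hn.monotone j.zero_le)
  have hManti : Antitone fun j => M (n j) := fun i j hij => by
    have hnij : (n i : ℝ) ≤ n j := by exact_mod_cast hn.monotone hij
    have h1 : ∀ k, (1:ℝ) ≤ n k := fun k => by exact_mod_cast hnpos k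
    exact min_le_min (hψanti (h1 i) (h1 j) hnij) (Real.exp_le_exp.2 (neg_le_neg hnij))
  obtain ⟨f, hf, hnear⟩ := exists_continuousOn_abs_sub_le_of_antitone hManti
    (fun j => (hMpos _ (hnpos j)).le) hstep
  refine ⟨f, hf, ⟨1, ⟨by norm_num, le_rfl⟩, fun hf1 => ?_⟩, n, hn, hnpos,
    fun j => (hQ j).2.En_le_and_abs_le (hψpos' _ (hnpos j)) (hnear j)⟩
  have h1 := hnear 0 1 ⟨by norm_num, le_rfl⟩
  have h2 := hQ0 1 ⟨by norm_num, le_rfl⟩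
  have hM1 : M (n 0) ≤ 1 := (min_le_right _ _).trans (Real.exp_le_one_iff.2 (by simp))
  rw [hf1, zero_sub, abs_neg] at h1
  linarith [le_abs_self ((Q 0).eval 1), (abs_le.1 h2).1]

theorem bernstein_flat_zeros
    (φ ψ : ℝ → ℝ)
    (hφpos : ∀ x, 1 ≤ x → 0 < φ x) (hψpos : ∀ x, 1 ≤ x → 0 < ψ x)
    (hφanti : AntitoneOn φ (Set.Ici (1:ℝ))) (hψanti : AntitoneOn ψ (Set.Ici (1:ℝ)))
    (hφ0 : Tendsto φ atTop (nhds 0)) (hψ0 : Tendsto ψ atTop (nhds 0)) :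
    ∃ f : ℝ → ℝ, ContinuousOn f (Set.Icc (-1:ℝ) 1) ∧
      (∃ x ∈ Set.Icc (-1:ℝ) 1, f x ≠ 0) ∧
      ∃ n : ℕ → ℕ, StrictMono n ∧ (∀ j, 0 < n j) ∧
        ∀ j, En f (n j) ≤ ψ (n j) ∧
          ∀ x : ℝ, |x| ≤ φ (n j) → |f x| ≤ Real.exp (-(n j : ℝ)) :=
  bernstein_flat_zeros_general φ ψ hψpos hψanti hφ0
end

section
/- Given a decreasing function φ : [1,+∞) → (0,+∞) with lim_{t→∞} φ(t) = 0, there exist a continuous function f on [-1,1] that is not identically zero and a strictly increasing sequence (n_j) of positive integers such that for every j: E_{n_j}(f) ≤ e^{-n_j} and m_f(E*_{n_j}(f)) ≥ 2 φ(n_j). -/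
open Filter MeasureTheory Set

/-- E*_n(f) = max(E_n(f), e^{-n}). -/
noncomputable def Estar (f : ℝ → ℝ) (n : ℕ) : ℝ := max (En f n) (Real.exp (-(n : ℝ)))

/-- m_f(t): the Lebesgue measure of {x ∈ [-1,1] : |f x| ≤ t}. -/
noncomputable def mf (f : ℝ → ℝ) (t : ℝ) : ℝ :=
  (volume {x : ℝ | x ∈ Set.Icc (-1:ℝ) 1 ∧ |f x| ≤ t}).toReal

/-!
`f` is the uniform limit of polynomials `Q k` of degree `≤ N k`, with values in `[0, 1]` on
`[-1, 1]`, `Q k (-1) = 1`, and `|Q k| ≤ exp (-N k) / 4` on the window `[1 - 2 φ (N k), 1]`.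
The next polynomial is `Q k` times the cutoff `ℙ(Bin(M s, u) ≥ s)`, `u = (1 - x) / 2`. First `M`
is chosen from `φ (N k)` so that the cutoff, which is at least `1 - (2 (1 - u / 2) ^ M) ^ s`, is
within `exp (-s)` of `1` off the window; then `s` so large that, with `N (k + 1) = N k + M s`,
its bound `(2 ^ M u) ^ s` is below `exp (-N (k + 1)) / 4` on the new window. Hence `Q` moves by
at most `exp (-N k) / 4` at step `k` and `f` stays within `exp (-N k) / 2` of `Q k`: this bounds
`E_{N k}(f)` and gives `|f| ≤ exp (-N k) ≤ E*_{N k}(f)` on the window.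
-/

open Polynomial Real Topology

lemma exp_neg_le_exp_neg_div_four {a b : ℝ} (h : a + 2 ≤ b) : exp (-b) ≤ exp (-a) / 4 := by
  have h4 : 4 ≤ exp 2 := by nlinarith [quadratic_le_exp_of_nonneg zero_le_two]
  calc exp (-b) ≤ exp (-a - 2) := exp_le_exp.mpr (by linarith)
    _ = exp (-a) / exp 2 := exp_sub _ _
    _ ≤ exp (-a) / 4 := div_le_div_of_nonneg_left (exp_pos _).le (by norm_num) h4

lemma exp_neg_succ_le_half {N : ℕ → ℕ} (hN : StrictMono N) (k : ℕ) :
    exp (-(N (k + 1) : ℝ)) ≤ exp (-(N k : ℝ)) / 2 := by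
  have h2 : 2 ≤ exp 1 := by linarith [add_one_le_exp (1 : ℝ)]
  have hN' : (N k : ℝ) + 1 ≤ N (k + 1) := by exact_mod_cast hN (Nat.lt_succ_self k)
  calc exp (-(N (k + 1) : ℝ)) ≤ exp (-(N k : ℝ) - 1) := exp_le_exp.mpr (by linarith)
    _ = exp (-(N k : ℝ)) / exp 1 := exp_sub _ _
    _ ≤ exp (-(N k : ℝ)) / 2 := div_le_div_of_nonneg_left (exp_pos _).le two_pos h2

lemma exists_seq_of_forall_exists_rel {α : Type*} {p : α → Prop} {r : α → α → Prop} {a : α}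
    (ha : p a) (h : ∀ x, p x → ∃ y, p y ∧ r x y) :
    ∃ u : ℕ → α, ∀ k, p (u k) ∧ r (u k) (u (k + 1)) := by
  choose! g hgp hgr using h
  have hp : ∀ k, p (g^[k] a) := fun k ↦ by
    induction k with
    | zero => exact ha
    | succ k ih => rw [Function.iterate_succ_apply']; exact hgp _ ih
  exact ⟨fun k ↦ g^[k] a, fun k ↦ ⟨hp k, by
    simp only [Function.iterate_succ_apply']; exact hgr _ (hp k)⟩⟩

lemma exists_continuousOn_limit {X : Type*} [TopologicalSpace X] {s : Set X} {Q : ℕ → X → ℝ}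
    {ε : ℕ → ℝ} (hQ : ∀ k, ContinuousOn (Q k) s) (hε : ∀ k, ε (k + 1) ≤ ε k / 2)
    (hstep : ∀ k, ∀ x ∈ s, |Q (k + 1) x - Q k x| ≤ ε k / 4) :
    ∃ f : X → ℝ, ContinuousOn f s ∧ ∀ k, ∀ x ∈ s, |f x - Q k x| ≤ ε k / 2 := by
  have hgeom : ∀ K i, ε (K + i) ≤ ε K / 2 ^ i := fun K i ↦ by
    induction i with
    | zero => simp
    | succ i ih =>
      calc ε (K + (i + 1)) ≤ ε (K + i) / 2 := hε _
        _ ≤ ε K / 2 ^ i / 2 := by gcongr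
        _ = ε K / 2 ^ (i + 1) := by rw [pow_succ, div_div]
  have hdist : ∀ x ∈ s, ∀ K i, dist (Q (K + i) x) (Q (K + i + 1) x) ≤ ε K / 2 / 2 / 2 ^ i :=
    fun x hx K i ↦ by
      rw [dist_comm, Real.dist_eq]
      calc |Q (K + i + 1) x - Q (K + i) x| ≤ ε (K + i) / 4 := hstep _ x hx
        _ ≤ ε K / 2 ^ i / 4 := by gcongr; exact hgeom K i
        _ = ε K / 2 / 2 / 2 ^ i := by ring
  set f : X → ℝ := fun x ↦ limUnder atTop (fun k ↦ Q k x)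
  have hlim : ∀ x ∈ s, Tendsto (fun k ↦ Q k x) atTop (𝓝 (f x)) := fun x hx ↦
    (cauchySeq_of_le_geometric_two (by simpa using hdist x hx 0)).tendsto_limUnder
  have hclose : ∀ k, ∀ x ∈ s, |f x - Q k x| ≤ ε k / 2 := fun k x hx ↦ by
    rw [abs_sub_comm, ← Real.dist_eq]
    exact dist_le_of_le_geometric_two_of_tendsto₀ (f := fun i ↦ Q (k + i) x) (hdist x hx k)
      ((hlim x hx).comp (tendsto_atTop_mono (fun i ↦ Nat.le_add_left i k) tendsto_id))
  refine ⟨f, ?_, hclose⟩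
  have hunif : TendstoUniformlyOn Q f atTop s := by
    rw [Metric.tendstoUniformlyOn_iff]
    intro δ hδ
    have hsmall : Tendsto (fun k : ℕ ↦ ε 0 / 2 / 2 ^ k) atTop (𝓝 0) :=
      tendsto_const_nhds.div_atTop (tendsto_pow_atTop_atTop_of_one_lt one_lt_two)
    filter_upwards [hsmall.eventually_lt_const hδ] with k hk x hx
    calc dist (f x) (Q k x) = |f x - Q k x| := Real.dist_eq _ _
      _ ≤ ε k / 2 := hclose k x hx
      _ ≤ ε 0 / 2 ^ k / 2 := by gcongr; simpa using hgeom 0 k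
      _ = ε 0 / 2 / 2 ^ k := div_right_comm _ _ _
      _ < δ := hk
  exact hunif.continuousOn (Frequently.of_forall hQ)

lemma En_le_of_forall_abs_sub_le {f : ℝ → ℝ} {n : ℕ} {P : ℝ[X]} {ε : ℝ} (hP : P.natDegree ≤ n)
    (h : ∀ x ∈ Icc (-1 : ℝ) 1, |f x - P.eval x| ≤ ε) : En f n ≤ ε := by
  unfold En
  refine (csInf_le ?_ (mem_image_of_mem _ (show P ∈ {P : ℝ[X] | P.natDegree ≤ n} from hP))).trans ?_
  · refine ⟨0, ?_⟩
    rintro _ ⟨Q, -, rfl⟩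
    exact Real.sSup_nonneg fun _ ⟨x, _, hx⟩ ↦ hx ▸ abs_nonneg _
  · exact csSup_le ((nonempty_Icc.mpr (by norm_num)).image _) (forall_mem_image.mpr h)

lemma sub_le_mf_of_forall_Icc {f : ℝ → ℝ} {t a : ℝ} (ha : -1 ≤ a)
    (h : ∀ x ∈ Icc a 1, |f x| ≤ t) : 1 - a ≤ mf f t := by
  have hsub : Icc a 1 ⊆ {x | x ∈ Icc (-1 : ℝ) 1 ∧ |f x| ≤ t} :=
    fun x hx ↦ ⟨⟨ha.trans hx.1, hx.2⟩, h x hx⟩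
  have hfin : volume {x | x ∈ Icc (-1 : ℝ) 1 ∧ |f x| ≤ t} ≠ ⊤ :=
    ne_top_of_le_ne_top (by simp [Real.volume_Icc]) (measure_mono fun _ hx ↦ hx.1 :
      volume {x | x ∈ Icc (-1 : ℝ) 1 ∧ |f x| ≤ t} ≤ volume (Icc (-1 : ℝ) 1))
  calc 1 - a ≤ (volume (Icc a 1)).toReal := by
        rw [Real.volume_Icc, ENNReal.toReal_ofReal']; exact le_max_left _ _
    _ ≤ mf f t := ENNReal.toReal_mono hfin (measure_mono hsub)

lemma bernsteinPolynomial_eval (m ν : ℕ) (u : ℝ) :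
    (bernsteinPolynomial ℝ m ν).eval u = m.choose ν * u ^ ν * (1 - u) ^ (m - ν) := by
  simp [bernsteinPolynomial]

section BernsteinTail

variable {m s ν : ℕ} {u : ℝ}

lemma bernsteinPolynomial_natDegree_le (h : ν ≤ m) : (bernsteinPolynomial ℝ m ν).natDegree ≤ m := by
  unfold bernsteinPolynomial
  compute_degree
  omega

lemma bernsteinPolynomial_eval_nonneg_s4 (hu₀ : 0 ≤ u) (hu₁ : u ≤ 1) :
    0 ≤ (bernsteinPolynomial ℝ m ν).eval u := by
  rw [bernsteinPolynomial_eval]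
  have : 0 ≤ 1 - u := by linarith
  positivity

/-- `ℙ(Bin(m, X) ≥ s)`. -/
noncomputable def bernsteinTail (m s : ℕ) : ℝ[X] :=
  ∑ ν ∈ Finset.Ico s (m + 1), bernsteinPolynomial ℝ m ν

lemma bernsteinTail_natDegree_le (m s : ℕ) : (bernsteinTail m s).natDegree ≤ m :=
  natDegree_sum_le_of_forall_le _ _ fun _ hν ↦
    bernsteinPolynomial_natDegree_le (Nat.lt_succ_iff.mp (Finset.mem_Ico.mp hν).2)

lemma one_sub_bernsteinTail_eval (hs : s ≤ m + 1) (u : ℝ) :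
    1 - (bernsteinTail m s).eval u = ∑ ν ∈ Finset.range s, (bernsteinPolynomial ℝ m ν).eval u := by
  rw [bernsteinTail, ← eval_finsetSum, ← eval_one (x := u),
    ← bernsteinPolynomial.sum ℝ m, ← Finset.sum_range_add_sum_Ico _ hs, eval_add]
  ring

lemma bernsteinTail_eval_nonneg (hu₀ : 0 ≤ u) (hu₁ : u ≤ 1) : 0 ≤ (bernsteinTail m s).eval u := by
  rw [bernsteinTail, eval_finsetSum]
  exact Finset.sum_nonneg fun _ _ ↦ bernsteinPolynomial_eval_nonneg_s4 hu₀ hu₁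

lemma bernsteinTail_eval_le_one (hu₀ : 0 ≤ u) (hu₁ : u ≤ 1) : (bernsteinTail m s).eval u ≤ 1 := by
  calc (bernsteinTail m s).eval u
      ≤ ∑ ν ∈ Finset.range (m + 1), (bernsteinPolynomial ℝ m ν).eval u := by
        rw [bernsteinTail, eval_finsetSum]
        exact Finset.sum_le_sum_of_subset_of_nonneg
          (fun _ hν ↦ Finset.mem_range.mpr (Finset.mem_Ico.mp hν).2)
          fun _ _ _ ↦ bernsteinPolynomial_eval_nonneg_s4 hu₀ hu₁
    _ = 1 := by rw [← eval_finsetSum, bernsteinPolynomial.sum, eval_one]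

lemma bernsteinTail_eval_one (hs : s ≤ m) : (bernsteinTail m s).eval 1 = 1 := by
  simp [bernsteinTail, eval_finsetSum, bernsteinPolynomial.eval_at_1, hs]

lemma bernsteinTail_eval_le (hu₀ : 0 ≤ u) (hu₁ : u ≤ 1) :
    (bernsteinTail m s).eval u ≤ 2 ^ m * u ^ s := by
  calc (bernsteinTail m s).eval u
      ≤ ∑ ν ∈ Finset.Ico s (m + 1), (m.choose ν : ℝ) * u ^ s := by
        rw [bernsteinTail, eval_finsetSum]
        refine Finset.sum_le_sum fun ν hν ↦ ?_
        rw [bernsteinPolynomial_eval, mul_assoc]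
        gcongr
        calc u ^ ν * (1 - u) ^ (m - ν) ≤ u ^ ν * 1 :=
              mul_le_mul_of_nonneg_left (pow_le_one₀ (by linarith) (by linarith)) (by positivity)
          _ ≤ u ^ s := by
              rw [mul_one]
              exact pow_le_pow_of_le_one hu₀ hu₁ (Finset.mem_Ico.mp hν).1
    _ ≤ ∑ ν ∈ Finset.range (m + 1), (m.choose ν : ℝ) * u ^ s :=
        Finset.sum_le_sum_of_subset_of_nonneg
          (fun _ hν ↦ Finset.mem_range.mpr (Finset.mem_Ico.mp hν).2)
          fun _ _ _ ↦ by positivity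
    _ = 2 ^ m * u ^ s := by
        have : ∑ ν ∈ Finset.range (m + 1), (m.choose ν : ℝ) = 2 ^ m := by
          exact_mod_cast Nat.sum_range_choose m
        rw [← Finset.sum_mul, this]

/-- Weighting the `ν`-th Bernstein polynomial by `2 ^ (s - ν) ≥ 1` turns the lower sum into the
binomial expansion of `(u / 2 + (1 - u)) ^ m`. -/
lemma one_sub_bernsteinTail_eval_le (hs : s ≤ m + 1) (hu₀ : 0 ≤ u) (hu₁ : u ≤ 1) :
    1 - (bernsteinTail m s).eval u ≤ 2 ^ s * (1 - u / 2) ^ m := by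
  have h1u : 0 ≤ 1 - u := by linarith
  rw [one_sub_bernsteinTail_eval hs]
  calc ∑ ν ∈ Finset.range s, (bernsteinPolynomial ℝ m ν).eval u
      ≤ ∑ ν ∈ Finset.range s, 2 ^ s * ((u / 2) ^ ν * (1 - u) ^ (m - ν) * m.choose ν) := by
        refine Finset.sum_le_sum fun ν hν ↦ ?_
        have h2 : (2 : ℝ) ^ ν ≤ 2 ^ s :=
          pow_le_pow_right₀ one_le_two (Finset.mem_range.mp hν).le
        rw [bernsteinPolynomial_eval, div_pow]
        have : 0 ≤ (m.choose ν : ℝ) * u ^ ν * (1 - u) ^ (m - ν) := by positivity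
        calc (m.choose ν : ℝ) * u ^ ν * (1 - u) ^ (m - ν)
            ≤ 2 ^ s / 2 ^ ν * ((m.choose ν : ℝ) * u ^ ν * (1 - u) ^ (m - ν)) :=
              le_mul_of_one_le_left this ((one_le_div (by positivity)).mpr h2)
          _ = _ := by ring
    _ ≤ ∑ ν ∈ Finset.range (m + 1), 2 ^ s * ((u / 2) ^ ν * (1 - u) ^ (m - ν) * m.choose ν) :=
        Finset.sum_le_sum_of_subset_of_nonneg (Finset.range_subset_range.mpr hs)
          fun _ _ _ ↦ by positivity
    _ = 2 ^ s * (1 - u / 2) ^ m := by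
        rw [← Finset.mul_sum, ← add_pow]
        ring_nf

end BernsteinTail

noncomputable def cutoff (m s : ℕ) : ℝ[X] := (bernsteinTail m s).comp (C 2⁻¹ * (1 - X))

lemma cutoff_eval (m s : ℕ) (x : ℝ) :
    (cutoff m s).eval x = (bernsteinTail m s).eval ((1 - x) / 2) := by
  rw [cutoff, eval_comp]
  congr 1
  simp only [eval_mul, eval_C, eval_sub, eval_one, eval_X]
  ring

lemma cutoff_natDegree_le (m s : ℕ) : (cutoff m s).natDegree ≤ m := by
  have h : (C (2⁻¹ : ℝ) * (1 - X)).natDegree ≤ 1 := by compute_degree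
  calc (cutoff m s).natDegree ≤ m * 1 :=
        natDegree_comp_le.trans (Nat.mul_le_mul (bernsteinTail_natDegree_le m s) h)
    _ = m := mul_one m

lemma cutoff_eval_mem_Icc {m s : ℕ} {x : ℝ} (hx : x ∈ Icc (-1 : ℝ) 1) :
    (cutoff m s).eval x ∈ Icc (0 : ℝ) 1 := by
  rw [cutoff_eval]
  exact ⟨bernsteinTail_eval_nonneg (by linarith [hx.2]) (by linarith [hx.1]),
    bernsteinTail_eval_le_one (by linarith [hx.2]) (by linarith [hx.1])⟩

lemma cutoff_eval_le {M s : ℕ} {t x : ℝ} (hx : x ∈ Icc (-1 : ℝ) 1) (hxt : 1 - 2 * t ≤ x) :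
    (cutoff (M * s) s).eval x ≤ (2 ^ M * t) ^ s := by
  rw [cutoff_eval]
  have hu₀ : 0 ≤ (1 - x) / 2 := by linarith [hx.2]
  calc (bernsteinTail (M * s) s).eval ((1 - x) / 2) ≤ 2 ^ (M * s) * ((1 - x) / 2) ^ s :=
        bernsteinTail_eval_le hu₀ (by linarith [hx.1])
    _ = (2 ^ M * ((1 - x) / 2)) ^ s := by rw [pow_mul, mul_pow]
    _ ≤ (2 ^ M * t) ^ s := by gcongr; linarith

lemma one_sub_cutoff_eval_le {M s : ℕ} {δ x : ℝ} (hM : 0 < M) (hMδ : 2 * (1 - δ / 2) ^ M ≤ exp (-1))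
    (hx : x ∈ Icc (-1 : ℝ) 1) (hxδ : x ≤ 1 - 2 * δ) :
    1 - (cutoff (M * s) s).eval x ≤ exp (-s) := by
  rw [cutoff_eval]
  have hu₁ : (1 - x) / 2 ≤ 1 := by linarith [hx.1]
  calc 1 - (bernsteinTail (M * s) s).eval ((1 - x) / 2)
      ≤ 2 ^ s * (1 - (1 - x) / 2 / 2) ^ (M * s) :=
        one_sub_bernsteinTail_eval_le (by nlinarith) (by linarith [hx.2]) hu₁
    _ = (2 * (1 - (1 - x) / 2 / 2) ^ M) ^ s := by rw [mul_pow, pow_mul]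
    _ ≤ (2 * (1 - δ / 2) ^ M) ^ s := by
        gcongr
        · have : 0 ≤ 1 - (1 - x) / 2 / 2 := by linarith
          positivity
        · linarith
        · linarith
    _ ≤ exp (-1) ^ s := by
        have : 0 ≤ 1 - δ / 2 := by linarith [hx.1]
        gcongr
    _ = exp (-s) := by rw [← exp_nat_mul, mul_neg_one]

lemma exists_cutoff_params {φ : ℝ → ℝ} (hφ0 : Tendsto φ atTop (𝓝 0)) {δ : ℝ} (hδ : 0 < δ)
    (n : ℕ) : ∃ M s : ℕ, 0 < M ∧ n + 2 ≤ s ∧ 2 * (1 - δ / 2) ^ M ≤ exp (-1) ∧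
      2 ^ M * φ (n + M * s : ℕ) ≤ exp (-(M + 1 : ℝ)) := by
  obtain ⟨M, hM⟩ := exists_pow_lt_of_lt_one (by positivity : 0 < exp (-1) / 2)
    (by linarith : 1 - δ / 2 < 1)
  have hM0 : 0 < M := by
    refine Nat.pos_of_ne_zero fun h ↦ ?_
    rw [h, pow_zero] at hM
    linarith [exp_le_one_iff.mpr (by norm_num : (-1 : ℝ) ≤ 0)]
  have hlim : Tendsto (fun s : ℕ ↦ φ (n + M * s : ℕ)) atTop (𝓝 0) :=
    hφ0.comp <| tendsto_natCast_atTop_atTop.comp <|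
      tendsto_atTop_mono (fun s ↦ show s ≤ n + M * s by nlinarith) tendsto_id
  obtain ⟨s, hs, hφs⟩ :=
    ((eventually_ge_atTop (n + 2)).and (hlim.eventually_lt_const (by positivity :
      (0 : ℝ) < exp (-(M + 1 : ℝ)) / 2 ^ M))).exists
  exact ⟨M, s, hM0, hs, by linarith, by rw [lt_div_iff₀' (by positivity)] at hφs; exact hφs.le⟩

structure IsStage (φ : ℝ → ℝ) (n : ℕ) (P : ℝ[X]) : Prop where
  pos : 0 < n
  φ_le_one : φ n ≤ 1
  natDegree_le : P.natDegree ≤ n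
  eval_neg_one : P.eval (-1) = 1
  eval_mem_Icc : ∀ x ∈ Icc (-1 : ℝ) 1, P.eval x ∈ Icc (0 : ℝ) 1

def IsFlat (φ : ℝ → ℝ) (n : ℕ) (P : ℝ[X]) : Prop :=
  ∀ x ∈ Icc (1 - 2 * φ n) 1, |P.eval x| ≤ exp (-n) / 4

lemma isStage_one {φ : ℝ → ℝ} {n : ℕ} (hn : 0 < n) (hφn : φ n ≤ 1) : IsStage φ n 1 :=
  ⟨hn, hφn, by simp, eval_one, fun _ _ ↦ by simp⟩

lemma IsFlat.abs_eval_mul_cutoff_sub_le {φ : ℝ → ℝ} {n M s : ℕ} {P : ℝ[X]} (hflat : IsFlat φ n P)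
    (hPx : ∀ x ∈ Icc (-1 : ℝ) 1, P.eval x ∈ Icc (0 : ℝ) 1) (hM : 0 < M)
    (hMδ : 2 * (1 - φ n / 2) ^ M ≤ exp (-1)) (hs : n + 2 ≤ s) (x : ℝ) (hx : x ∈ Icc (-1 : ℝ) 1) :
    |(P * cutoff (M * s) s).eval x - P.eval x| ≤ exp (-n) / 4 := by
  have hG := cutoff_eval_mem_Icc (m := M * s) (s := s) hx
  rw [eval_mul, show P.eval x * (cutoff (M * s) s).eval x - P.eval x
      = -(P.eval x * (1 - (cutoff (M * s) s).eval x)) by ring, abs_neg,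
    abs_of_nonneg (mul_nonneg (hPx x hx).1 (by linarith [hG.2]))]
  rcases le_or_gt (1 - 2 * φ n) x with hxn | hxn
  · calc P.eval x * (1 - (cutoff (M * s) s).eval x) ≤ P.eval x * 1 :=
          mul_le_mul_of_nonneg_left (by linarith [hG.1]) (hPx x hx).1
      _ ≤ exp (-n) / 4 := by
          rw [mul_one, ← abs_of_nonneg (hPx x hx).1]
          exact hflat x ⟨hxn, hx.2⟩
  · calc P.eval x * (1 - (cutoff (M * s) s).eval x) ≤ 1 * exp (-s) :=
          mul_le_mul (hPx x hx).2 (one_sub_cutoff_eval_le hM hMδ hx hxn.le)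
            (by linarith [hG.2]) zero_le_one
      _ ≤ exp (-n) / 4 := by
          rw [one_mul]
          exact exp_neg_le_exp_neg_div_four (by exact_mod_cast hs)

lemma IsStage.exists_next {φ : ℝ → ℝ} (hφpos : ∀ x, 1 ≤ x → 0 < φ x)
    (hφ0 : Tendsto φ atTop (𝓝 0)) {n : ℕ} {P : ℝ[X]} (hP : IsStage φ n P) :
    ∃ N P', IsStage φ N P' ∧ IsFlat φ N P' ∧ n < N ∧
      (IsFlat φ n P → ∀ x ∈ Icc (-1 : ℝ) 1, |P'.eval x - P.eval x| ≤ exp (-n) / 4) := by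
  have hφ : ∀ k : ℕ, 0 < k → 0 < φ k := fun k hk ↦ hφpos k (by exact_mod_cast hk)
  obtain ⟨M, s, hM, hs, hMδ, hMφ⟩ := exists_cutoff_params hφ0 (hφ n hP.pos) n
  set N := n + M * s
  have hnN : n < N := Nat.lt_add_of_pos_right (Nat.mul_pos hM (by omega))
  have hN : 0 < N := hP.pos.trans hnN
  have hNs : (N : ℝ) + 2 ≤ s * (M + 1) := by
    have : ((n + 2 : ℕ) : ℝ) ≤ s := by exact_mod_cast hs
    push_cast [N] at this ⊢
    linarith
  have hφN : φ N ≤ 1 := by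
    have h1 : exp (-(M + 1 : ℝ)) ≤ 1 := exp_le_one_iff.mpr (by linarith)
    have h2 : (1 : ℝ) ≤ 2 ^ M := one_le_pow₀ one_le_two
    nlinarith [hφ N hN]
  have hG := fun x (hx : x ∈ Icc (-1 : ℝ) 1) ↦ cutoff_eval_mem_Icc (m := M * s) (s := s) hx
  have hPx := hP.eval_mem_Icc
  refine ⟨N, P * cutoff (M * s) s, ⟨hN, hφN, ?_, ?_, fun x hx ↦ ?_⟩, fun x hx ↦ ?_,
    hnN, fun hflat ↦ hflat.abs_eval_mul_cutoff_sub_le hPx hM hMδ hs⟩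
  · exact natDegree_mul_le.trans (add_le_add hP.natDegree_le (cutoff_natDegree_le _ _))
  · rw [eval_mul, hP.eval_neg_one, cutoff_eval, one_mul]
    norm_num [bernsteinTail_eval_one (Nat.le_mul_of_pos_left s hM)]
  · rw [eval_mul]
    exact ⟨mul_nonneg (hPx x hx).1 (hG x hx).1, mul_le_one₀ (hPx x hx).2 (hG x hx).1 (hG x hx).2⟩
  · have hx' : x ∈ Icc (-1 : ℝ) 1 := ⟨by linarith [hx.1], hx.2⟩
    rw [eval_mul, abs_of_nonneg (mul_nonneg (hPx x hx').1 (hG x hx').1)]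
    calc P.eval x * (cutoff (M * s) s).eval x ≤ 1 * (2 ^ M * φ N) ^ s :=
          mul_le_mul (hPx x hx').2 (cutoff_eval_le hx' hx.1) (hG x hx').1 zero_le_one
      _ ≤ exp (-(M + 1 : ℝ)) ^ s := by
          rw [one_mul]
          exact pow_le_pow_left₀ (by positivity [hφ N hN]) hMφ s
      _ = exp (-(s * (M + 1) : ℝ)) := by rw [← exp_nat_mul, mul_neg]
      _ ≤ exp (-N) / 4 := exp_neg_le_exp_neg_div_four hNs

lemma exists_seq_isStage {φ : ℝ → ℝ} (hφpos : ∀ x, 1 ≤ x → 0 < φ x)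
    (hφ0 : Tendsto φ atTop (𝓝 0)) :
    ∃ (N : ℕ → ℕ) (Q : ℕ → ℝ[X]), StrictMono N ∧ ∀ k, IsStage φ (N k) (Q k) ∧
      IsFlat φ (N k) (Q k) ∧
        ∀ x ∈ Icc (-1 : ℝ) 1, |(Q (k + 1)).eval x - (Q k).eval x| ≤ exp (-N k) / 4 := by
  obtain ⟨n₀, hn₀, hφn₀⟩ : ∃ n₀ : ℕ, 0 < n₀ ∧ φ n₀ ≤ 1 :=
    ((eventually_gt_atTop 0).and <| (tendsto_natCast_atTop_atTop.eventually
      (hφ0.eventually_le_const zero_lt_one))).exists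
  obtain ⟨N₀, P₀, hstage₀, hflat₀, -⟩ := (isStage_one hn₀ hφn₀).exists_next hφpos hφ0
  obtain ⟨u, hu⟩ := exists_seq_of_forall_exists_rel
    (p := fun a : ℕ × ℝ[X] ↦ IsStage φ a.1 a.2 ∧ IsFlat φ a.1 a.2)
    (r := fun a b ↦ a.1 < b.1 ∧ ∀ x ∈ Icc (-1 : ℝ) 1, |b.2.eval x - a.2.eval x| ≤ exp (-a.1) / 4)
    (a := (N₀, P₀)) ⟨hstage₀, hflat₀⟩ fun a ⟨hstage, hflat⟩ ↦ by
      obtain ⟨N, P, hstage', hflat', hlt, hclose⟩ := hstage.exists_next hφpos hφ0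
      exact ⟨(N, P), ⟨hstage', hflat'⟩, hlt, hclose hflat⟩
  exact ⟨fun k ↦ (u k).1, fun k ↦ (u k).2, strictMono_nat_of_lt_succ fun k ↦ (hu k).2.1,
    fun k ↦ ⟨(hu k).1.1, (hu k).1.2, (hu k).2.2⟩⟩

lemma IsFlat.two_mul_le_mf {φ f : ℝ → ℝ} {n : ℕ} {Q : ℝ[X]} (hflat : IsFlat φ n Q)
    (hstage : IsStage φ n Q) (hfQ : ∀ x ∈ Icc (-1 : ℝ) 1, |f x - Q.eval x| ≤ exp (-n) / 2) :
    2 * φ n ≤ mf f (Estar f n) := by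
  have hwin : ∀ x ∈ Icc (1 - 2 * φ n) 1, |f x| ≤ Estar f n := fun x hx ↦ by
    have hx' : x ∈ Icc (-1 : ℝ) 1 := ⟨by linarith [hx.1, hstage.φ_le_one], hx.2⟩
    calc |f x| ≤ exp (-n) := by
          linarith [abs_sub_abs_le_abs_sub (f x) (Q.eval x), hfQ x hx', hflat x hx, exp_pos (-n)]
      _ ≤ Estar f n := le_max_right _ _
  linarith [sub_le_mf_of_forall_Icc (by linarith [hstage.φ_le_one]) hwin]

theorem bernstein_large_level_sets_general
    (φ : ℝ → ℝ)
    (hφpos : ∀ x, 1 ≤ x → 0 < φ x)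
    (hφ0 : Tendsto φ atTop (nhds 0)) :
    ∃ f : ℝ → ℝ, ContinuousOn f (Set.Icc (-1:ℝ) 1) ∧
      (∃ x ∈ Set.Icc (-1:ℝ) 1, f x ≠ 0) ∧
      ∃ n : ℕ → ℕ, StrictMono n ∧ (∀ j, 0 < n j) ∧
        ∀ j, En f (n j) ≤ Real.exp (-(n j : ℝ)) ∧
          mf f (Estar f (n j)) ≥ 2 * φ (n j) := by
  obtain ⟨N, Q, hN, hQ⟩ := exists_seq_isStage hφpos hφ0
  obtain ⟨f, hf, hfQ⟩ := exists_continuousOn_limit (ε := fun k ↦ exp (-N k))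
    (fun k ↦ (Q k).continuousOn) (exp_neg_succ_le_half hN) fun k ↦ (hQ k).2.2
  refine ⟨f, hf, ⟨-1, by norm_num, fun hf₀ ↦ ?_⟩, N, hN, fun j ↦ (hQ j).1.pos,
    fun j ↦ ⟨En_le_of_forall_abs_sub_le (hQ j).1.natDegree_le fun x hx ↦
      (hfQ j x hx).trans (half_le_self (exp_pos _).le), (hQ j).2.1.two_mul_le_mf (hQ j).1 (hfQ j)⟩⟩
  have h := hfQ 0 (-1) (by norm_num)
  rw [hf₀, (hQ 0).1.eval_neg_one] at h
  have : exp (-(N 0 : ℝ)) ≤ 1 := exp_le_one_iff.mpr (neg_nonpos.mpr (Nat.cast_nonneg _))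
  norm_num at h
  linarith

theorem bernstein_large_level_sets
    (φ : ℝ → ℝ)
    (hφpos : ∀ x, 1 ≤ x → 0 < φ x)
    (hφanti : AntitoneOn φ (Set.Ici (1:ℝ)))
    (hφ0 : Tendsto φ atTop (nhds 0)) :
    ∃ f : ℝ → ℝ, ContinuousOn f (Set.Icc (-1:ℝ) 1) ∧
      (∃ x ∈ Set.Icc (-1:ℝ) 1, f x ≠ 0) ∧
      ∃ n : ℕ → ℕ, StrictMono n ∧ (∀ j, 0 < n j) ∧
        ∀ j, En f (n j) ≤ Real.exp (-(n j : ℝ)) ∧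
          mf f (Estar f (n j)) ≥ 2 * φ (n j) :=
  bernstein_large_level_sets_general φ hφpos hφ0
end
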